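/- Under the stated assumptions, the unit normal vector satisfies the evolution equation κ ∂_t N = −κ (∂_s v_N + κ v_T − τ v_B) T + (∂_s² v_B + ∂_s(τ v_N) + τ (∂_s v_N + κ v_T − τ v_B)) B. -/

import Mathlib

noncomputable section

open Real

/-- The cross product on `EuclideanSpace ℝ (Fin 3)`. -/
def cross3 (a b : EuclideanSpace ℝ (Fin 3)) : EuclideanSpace ℝ (Fin 3) :=
  (WithLp.equiv 2 (Fin 3 → ℝ)).symm
    ![a 1 * b 2 - a 2 * b 1, a 2 * b 0 - a 0 * b 2, a 0 * b 1 - a 1 * b 0]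

/-- Partial derivative with respect to the first (spatial) variable `u`. -/
def pu {α : Type*} [NormedAddCommGroup α] [NormedSpace ℝ α]
    (f : ℝ × ℝ → α) (p : ℝ × ℝ) : α :=
  deriv (fun u => f (u, p.2)) p.1

/-- Partial derivative with respect to the second (time) variable `t`. -/
def pt {α : Type*} [NormedAddCommGroup α] [NormedSpace ℝ α]
    (f : ℝ × ℝ → α) (p : ℝ × ℝ) : α :=
  deriv (fun t => f (p.1, t)) p.2

/-- Arc-length derivative `∂_s = g⁻¹ ∂_u` along the curves parametrized by `X`. -/
def Ds (X : ℝ × ℝ → EuclideanSpace ℝ (Fin 3)) {α : Type*}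
    [NormedAddCommGroup α] [NormedSpace ℝ α] (f : ℝ × ℝ → α) (p : ℝ × ℝ) : α :=
  ‖pu X p‖⁻¹ • pu f p

namespace NE

/-- `C^∞` at every point. -/
def Sm {α : Type*} [NormedAddCommGroup α] [NormedSpace ℝ α] (f : ℝ × ℝ → α) : Prop :=
  ∀ p : ℝ × ℝ, ContDiffAt ℝ ((⊤ : ℕ∞) : WithTop ℕ∞) f p

variable {α : Type*} [NormedAddCommGroup α] [NormedSpace ℝ α]
variable {β : Type*} [NormedAddCommGroup β] [NormedSpace ℝ β]

lemma one_le_inf : (1 : WithTop ℕ∞) ≤ ((⊤ : ℕ∞) : WithTop ℕ∞) := by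
  have h : (1 : WithTop ℕ∞) = ((1 : ℕ∞) : WithTop ℕ∞) := rfl
  rw [h]; exact WithTop.coe_le_coe.mpr le_top

lemma two_le_inf : (2 : WithTop ℕ∞) ≤ ((⊤ : ℕ∞) : WithTop ℕ∞) := by
  have h : (2 : WithTop ℕ∞) = ((2 : ℕ∞) : WithTop ℕ∞) := rfl
  rw [h]; exact WithTop.coe_le_coe.mpr le_top

lemma Sm.diffAt {f : ℝ × ℝ → α} (hf : Sm f) (p : ℝ × ℝ) : DifferentiableAt ℝ f p :=
  (hf p).differentiableAt (ne_of_gt (lt_of_lt_of_le zero_lt_one one_le_inf))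

lemma hasDerivAt_sliceU {f : ℝ × ℝ → α} {p : ℝ × ℝ} (hf : DifferentiableAt ℝ f p) :
    HasDerivAt (fun u => f (u, p.2)) (fderiv ℝ f p (1, 0)) p.1 := by
  have h1 : HasDerivAt (fun u : ℝ => ((u, p.2) : ℝ × ℝ)) ((1 : ℝ), (0 : ℝ)) p.1 :=
    (hasDerivAt_id p.1).prodMk (hasDerivAt_const _ _)
  have := (hf.hasFDerivAt.comp_hasDerivAt p.1 (by simpa using h1))
  simpa [Function.comp_def] using this

lemma hasDerivAt_sliceT {f : ℝ × ℝ → α} {p : ℝ × ℝ} (hf : DifferentiableAt ℝ f p) :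
    HasDerivAt (fun t => f (p.1, t)) (fderiv ℝ f p (0, 1)) p.2 := by
  have h1 : HasDerivAt (fun t : ℝ => ((p.1, t) : ℝ × ℝ)) ((0 : ℝ), (1 : ℝ)) p.2 :=
    (hasDerivAt_const _ _).prodMk (hasDerivAt_id p.2)
  have := (hf.hasFDerivAt.comp_hasDerivAt p.2 (by simpa using h1))
  simpa [Function.comp_def] using this

lemma pu_eq_fderiv {f : ℝ × ℝ → α} {p : ℝ × ℝ} (hf : DifferentiableAt ℝ f p) :
    pu f p = fderiv ℝ f p (1, 0) := (hasDerivAt_sliceU hf).deriv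

lemma pt_eq_fderiv {f : ℝ × ℝ → α} {p : ℝ × ℝ} (hf : DifferentiableAt ℝ f p) :
    pt f p = fderiv ℝ f p (0, 1) := (hasDerivAt_sliceT hf).deriv

lemma Sm.hasDerivAt_pu {f : ℝ × ℝ → α} (hf : Sm f) (p : ℝ × ℝ) :
    HasDerivAt (fun u => f (u, p.2)) (pu f p) p.1 := by
  rw [pu_eq_fderiv (hf.diffAt p)]; exact hasDerivAt_sliceU (hf.diffAt p)

lemma Sm.hasDerivAt_pt {f : ℝ × ℝ → α} (hf : Sm f) (p : ℝ × ℝ) :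
    HasDerivAt (fun t => f (p.1, t)) (pt f p) p.2 := by
  rw [pt_eq_fderiv (hf.diffAt p)]; exact hasDerivAt_sliceT (hf.diffAt p)

lemma top_add_one_le : ((⊤ : ℕ∞) : WithTop ℕ∞) + 1 ≤ ((⊤ : ℕ∞) : WithTop ℕ∞) := by
  norm_num

lemma Sm.puSm {f : ℝ × ℝ → α} (hf : Sm f) : Sm (pu f) := by
  intro p
  have : _root_.pu f = fun q => fderiv ℝ f q (1, 0) := by
    funext q; exact pu_eq_fderiv (hf.diffAt q)
  rw [this]
  exact ((hf p).fderiv_right top_add_one_le).clm_apply contDiffAt_const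

lemma Sm.ptSm {f : ℝ × ℝ → α} (hf : Sm f) : Sm (pt f) := by
  intro p
  have : _root_.pt f = fun q => fderiv ℝ f q (0, 1) := by
    funext q; exact pt_eq_fderiv (hf.diffAt q)
  rw [this]
  exact ((hf p).fderiv_right top_add_one_le).clm_apply contDiffAt_const

/-- Clairaut / Schwarz. -/
lemma pt_pu_comm {f : ℝ × ℝ → α} (hf : Sm f) (p : ℝ × ℝ) :
    pt (pu f) p = pu (pt f) p := by
  have hpufun : pu f = fun q => fderiv ℝ f q (1, 0) := by
    funext q; exact pu_eq_fderiv (hf.diffAt q)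
  have hptfun : pt f = fun q => fderiv ℝ f q (0, 1) := by
    funext q; exact pt_eq_fderiv (hf.diffAt q)
  have hD : DifferentiableAt ℝ (fderiv ℝ f) p :=
    ((hf p).fderiv_right top_add_one_le).differentiableAt (ne_of_gt (lt_of_lt_of_le zero_lt_one one_le_inf))
  have key : ∀ v w : ℝ × ℝ, fderiv ℝ (fun q => fderiv ℝ f q v) p w
      = fderiv ℝ (fderiv ℝ f) p w v := by
    intro v w
    rw [fderiv_clm_apply hD (differentiableAt_const v)]
    simp
  have hsymm : fderiv ℝ (fderiv ℝ f) p (0, 1) (1, 0)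
      = fderiv ℝ (fderiv ℝ f) p (1, 0) (0, 1) := by
    have := (hf p).isSymmSndFDerivAt (by rw [minSmoothness_of_isRCLikeNormedField]; exact two_le_inf)
    exact (this.eq (0,1) (1,0))
  have d1 : DifferentiableAt ℝ (fun q => fderiv ℝ f q (1, 0)) p :=
    hD.clm_apply (differentiableAt_const _)
  have d2 : DifferentiableAt ℝ (fun q => fderiv ℝ f q (0, 1)) p :=
    hD.clm_apply (differentiableAt_const _)
  rw [hpufun, hptfun, pt_eq_fderiv d1, pu_eq_fderiv d2, key, key, hsymm]


section rules
variable {E : Type*} [NormedAddCommGroup E] [InnerProductSpace ℝ E]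

lemma pu_add {f g : ℝ × ℝ → α} (hf : Sm f) (hg : Sm g) (p : ℝ × ℝ) :
    _root_.pu (fun q => f q + g q) p = _root_.pu f p + _root_.pu g p :=
  ((hf.hasDerivAt_pu p).add (hg.hasDerivAt_pu p)).deriv

lemma pt_add {f g : ℝ × ℝ → α} (hf : Sm f) (hg : Sm g) (p : ℝ × ℝ) :
    _root_.pt (fun q => f q + g q) p = _root_.pt f p + _root_.pt g p :=
  ((hf.hasDerivAt_pt p).add (hg.hasDerivAt_pt p)).deriv

lemma pu_smul {c : ℝ × ℝ → ℝ} {f : ℝ × ℝ → α} (hc : Sm c) (hf : Sm f) (p : ℝ × ℝ) :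
    _root_.pu (fun q => c q • f q) p = _root_.pu c p • f p + c p • _root_.pu f p := by
  have := ((hc.hasDerivAt_pu p).smul (hf.hasDerivAt_pu p)).deriv
  rw [show ((fun u => c (u, p.2)) • fun u => f (u, p.2)) = fun u => (fun q => c q • f q) (u, p.2) from rfl] at this
  rw [_root_.pu, this]; abel

lemma pt_smul {c : ℝ × ℝ → ℝ} {f : ℝ × ℝ → α} (hc : Sm c) (hf : Sm f) (p : ℝ × ℝ) :
    _root_.pt (fun q => c q • f q) p = _root_.pt c p • f p + c p • _root_.pt f p := by
  have := ((hc.hasDerivAt_pt p).smul (hf.hasDerivAt_pt p)).deriv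
  rw [show ((fun t => c (p.1, t)) • fun t => f (p.1, t)) = fun t => c (p.1, t) • f (p.1, t) from rfl] at this
  rw [_root_.pt, this]; abel

lemma pu_mul {c d : ℝ × ℝ → ℝ} (hc : Sm c) (hd : Sm d) (p : ℝ × ℝ) :
    _root_.pu (fun q => c q * d q) p = _root_.pu c p * d p + c p * _root_.pu d p := by
  have := ((hc.hasDerivAt_pu p).mul (hd.hasDerivAt_pu p)).deriv
  rw [show ((fun u => c (u, p.2)) * fun u => d (u, p.2)) = fun u => c (u, p.2) * d (u, p.2) from rfl] at this
  rw [_root_.pu, this]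

lemma pt_mul {c d : ℝ × ℝ → ℝ} (hc : Sm c) (hd : Sm d) (p : ℝ × ℝ) :
    _root_.pt (fun q => c q * d q) p = _root_.pt c p * d p + c p * _root_.pt d p := by
  have := ((hc.hasDerivAt_pt p).mul (hd.hasDerivAt_pt p)).deriv
  rw [show ((fun t => c (p.1, t)) * fun t => d (p.1, t)) = fun t => c (p.1, t) * d (p.1, t) from rfl] at this
  rw [_root_.pt, this]

lemma pu_inv {c : ℝ × ℝ → ℝ} (hc : Sm c) (p : ℝ × ℝ) (h0 : c p ≠ 0) :
    _root_.pu (fun q => (c q)⁻¹) p = -(_root_.pu c p) / (c p) ^ 2 := by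
  have := ((hc.hasDerivAt_pu p).inv h0).deriv
  rw [show (fun u => c (u, p.2))⁻¹ = fun u => (c (u, p.2))⁻¹ from rfl] at this
  rw [_root_.pu, this]

lemma pt_inv {c : ℝ × ℝ → ℝ} (hc : Sm c) (p : ℝ × ℝ) (h0 : c p ≠ 0) :
    _root_.pt (fun q => (c q)⁻¹) p = -(_root_.pt c p) / (c p) ^ 2 := by
  have := ((hc.hasDerivAt_pt p).inv h0).deriv
  rw [show (fun t => c (p.1, t))⁻¹ = fun t => (c (p.1, t))⁻¹ from rfl] at this
  rw [_root_.pt, this]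

lemma pu_inner {f g : ℝ × ℝ → E} (hf : Sm f) (hg : Sm g) (p : ℝ × ℝ) :
    _root_.pu (fun q => (inner ℝ (f q) (g q) : ℝ)) p
      = (inner ℝ (_root_.pu f p) (g p) : ℝ) + (inner ℝ (f p) (_root_.pu g p) : ℝ) := by
  have := (HasDerivAt.inner ℝ (hf.hasDerivAt_pu p) (hg.hasDerivAt_pu p)).deriv
  rw [_root_.pu, this]; exact add_comm _ _

lemma pt_inner {f g : ℝ × ℝ → E} (hf : Sm f) (hg : Sm g) (p : ℝ × ℝ) :
    _root_.pt (fun q => (inner ℝ (f q) (g q) : ℝ)) p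
      = (inner ℝ (_root_.pt f p) (g p) : ℝ) + (inner ℝ (f p) (_root_.pt g p) : ℝ) := by
  have := (HasDerivAt.inner ℝ (hf.hasDerivAt_pt p) (hg.hasDerivAt_pt p)).deriv
  rw [_root_.pt, this]; exact add_comm _ _

lemma pu_const (a : α) (p : ℝ × ℝ) : _root_.pu (fun _ => a) p = 0 := by
  simp [_root_.pu]

lemma pt_const (a : α) (p : ℝ × ℝ) : _root_.pt (fun _ => a) p = 0 := by
  simp [_root_.pt]

lemma pu_clm (L : α →L[ℝ] β) {f : ℝ × ℝ → α} (hf : Sm f) (p : ℝ × ℝ) :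
    _root_.pu (fun q => L (f q)) p = L (_root_.pu f p) :=
  (L.hasFDerivAt.comp_hasDerivAt p.1 (hf.hasDerivAt_pu p)).deriv

lemma pt_clm (L : α →L[ℝ] β) {f : ℝ × ℝ → α} (hf : Sm f) (p : ℝ × ℝ) :
    _root_.pt (fun q => L (f q)) p = L (_root_.pt f p) :=
  (L.hasFDerivAt.comp_hasDerivAt p.2 (hf.hasDerivAt_pt p)).deriv

-- Sm closure rules
lemma Sm.add {f g : ℝ × ℝ → α} (hf : Sm f) (hg : Sm g) : Sm (fun q => f q + g q) :=
  fun p => (hf p).add (hg p)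

lemma Sm.smul {c : ℝ × ℝ → ℝ} {f : ℝ × ℝ → α} (hc : Sm c) (hf : Sm f) :
    Sm (fun q => c q • f q) := fun p => (hc p).smul (hf p)

lemma Sm.mul {c d : ℝ × ℝ → ℝ} (hc : Sm c) (hd : Sm d) : Sm (fun q => c q * d q) :=
  fun p => (hc p).mul (hd p)

lemma Sm.inv {c : ℝ × ℝ → ℝ} (hc : Sm c) (h0 : ∀ p, c p ≠ 0) : Sm (fun q => (c q)⁻¹) :=
  fun p => (hc p).inv (h0 p)

lemma Sm.inner' {f g : ℝ × ℝ → E} (hf : Sm f) (hg : Sm g) :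
    Sm (fun q => (inner ℝ (f q) (g q) : ℝ)) := fun p => ContDiffAt.inner ℝ (hf p) (hg p)

lemma Sm.norm' {f : ℝ × ℝ → E} (hf : Sm f) (h0 : ∀ p, f p ≠ 0) :
    Sm (fun q => ‖f q‖) := fun p => ContDiffAt.norm ℝ (hf p) (h0 p)

lemma Sm.clm (L : α →L[ℝ] β) {f : ℝ × ℝ → α} (hf : Sm f) : Sm (fun q => L (f q)) :=
  fun p => (L.contDiff.contDiffAt).comp p (hf p)

lemma Sm.const (a : α) : Sm (fun _ : ℝ × ℝ => a) := fun _ => contDiffAt_const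

lemma Sm.sub {f g : ℝ × ℝ → α} (hf : Sm f) (hg : Sm g) : Sm (fun q => f q - g q) :=
  fun p => (hf p).sub (hg p)

end rules

section cross
local notation "E3" => EuclideanSpace ℝ (Fin 3)

lemma sub_rule {f g : ℝ × ℝ → α} (hf : Sm f) (hg : Sm g) (p : ℝ × ℝ) :
    _root_.pu (fun q => f q - g q) p = _root_.pu f p - _root_.pu g p :=
  ((hf.hasDerivAt_pu p).sub (hg.hasDerivAt_pu p)).deriv

lemma pt_sub {f g : ℝ × ℝ → α} (hf : Sm f) (hg : Sm g) (p : ℝ × ℝ) :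
    _root_.pt (fun q => f q - g q) p = _root_.pt f p - _root_.pt g p :=
  ((hf.hasDerivAt_pt p).sub (hg.hasDerivAt_pt p)).deriv

lemma cross3_apply (a b : E3) (i : Fin 3) :
    cross3 a b i = ![a 1 * b 2 - a 2 * b 1, a 2 * b 0 - a 0 * b 2,
      a 0 * b 1 - a 1 * b 0] i := by
  simp [cross3]

lemma inner3 (a b : E3) : (inner ℝ a b : ℝ) = a 0 * b 0 + a 1 * b 1 + a 2 * b 2 := by
  simp [PiLp.inner_apply, Fin.sum_univ_three, RCLike.inner_apply, mul_comm]

def ee (i : Fin 3) : E3 := EuclideanSpace.single i (1 : ℝ)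

lemma cross3_decomp (a b : E3) : cross3 a b =
    (a 1 * b 2 - a 2 * b 1) • ee 0 + ((a 2 * b 0 - a 0 * b 2) • ee 1
      + (a 0 * b 1 - a 1 * b 0) • ee 2) := by
  refine (WithLp.equiv 2 (Fin 3 → ℝ)).injective (funext fun i => ?_)
  fin_cases i <;>
    simp [cross3, ee, EuclideanSpace.single_apply, Fin.isValue] <;> ring

lemma coord_eq_proj (i : Fin 3) (a : E3) : a i = EuclideanSpace.proj i a := rfl

lemma Sm.coord {f : ℝ × ℝ → E3} (hf : Sm f) (i : Fin 3) : Sm (fun q => f q i) :=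
  Sm.clm (EuclideanSpace.proj i) hf

lemma pu_coord {f : ℝ × ℝ → E3} (hf : Sm f) (i : Fin 3) (p : ℝ × ℝ) :
    _root_.pu (fun q => f q i) p = _root_.pu f p i :=
  pu_clm (EuclideanSpace.proj i) hf p

lemma pt_coord {f : ℝ × ℝ → E3} (hf : Sm f) (i : Fin 3) (p : ℝ × ℝ) :
    _root_.pt (fun q => f q i) p = _root_.pt f p i :=
  pt_clm (EuclideanSpace.proj i) hf p

lemma cross_fun_decomp (f g : ℝ × ℝ → E3) :
    (fun q => cross3 (f q) (g q)) =
    fun q => (f q 1 * g q 2 - f q 2 * g q 1) • ee 0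
      + ((f q 2 * g q 0 - f q 0 * g q 2) • ee 1
        + (f q 0 * g q 1 - f q 1 * g q 0) • ee 2) :=
  funext fun q => cross3_decomp (f q) (g q)

lemma Sm.crossc {f g : ℝ × ℝ → E3} (hf : Sm f) (hg : Sm g) :
    Sm (fun q => cross3 (f q) (g q)) := by
  rw [cross_fun_decomp]
  exact Sm.add (Sm.smul (Sm.sub ((hf.coord 1).mul (hg.coord 2))
      ((hf.coord 2).mul (hg.coord 1))) (Sm.const _))
    (Sm.add (Sm.smul (Sm.sub ((hf.coord 2).mul (hg.coord 0))
      ((hf.coord 0).mul (hg.coord 2))) (Sm.const _))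
    (Sm.smul (Sm.sub ((hf.coord 0).mul (hg.coord 1))
      ((hf.coord 1).mul (hg.coord 0))) (Sm.const _)))

lemma pu_cross {f g : ℝ × ℝ → E3} (hf : Sm f) (hg : Sm g) (p : ℝ × ℝ) :
    _root_.pu (fun q => cross3 (f q) (g q)) p
      = cross3 (_root_.pu f p) (g p) + cross3 (f p) (_root_.pu g p) := by
  have hc : ∀ i j : Fin 3, Sm (fun q => f q i * g q j) :=
    fun i j => (hf.coord i).mul (hg.coord j)
  have hsm : ∀ i j k l : Fin 3, Sm (fun q => f q i * g q j - f q k * g q l) :=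
    fun i j k l => (hc i j).sub (hc k l)
  rw [cross_fun_decomp]
  rw [pu_add (Sm.smul (hsm 1 2 2 1) (Sm.const _))
    (Sm.add (Sm.smul (hsm 2 0 0 2) (Sm.const _)) (Sm.smul (hsm 0 1 1 0) (Sm.const _))),
    pu_add (Sm.smul (hsm 2 0 0 2) (Sm.const _)) (Sm.smul (hsm 0 1 1 0) (Sm.const _)),
    pu_smul (hsm 1 2 2 1) (Sm.const _), pu_smul (hsm 2 0 0 2) (Sm.const _),
    pu_smul (hsm 0 1 1 0) (Sm.const _), pu_const, pu_const, pu_const]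
  rw [sub_rule (hc 1 2) (hc 2 1), sub_rule (hc 2 0) (hc 0 2), sub_rule (hc 0 1) (hc 1 0)]
  rw [pu_mul (hf.coord 1) (hg.coord 2), pu_mul (hf.coord 2) (hg.coord 1),
    pu_mul (hf.coord 2) (hg.coord 0), pu_mul (hf.coord 0) (hg.coord 2),
    pu_mul (hf.coord 0) (hg.coord 1), pu_mul (hf.coord 1) (hg.coord 0)]
  simp only [pu_coord hf, pu_coord hg]
  rw [cross3_decomp (_root_.pu f p) (g p), cross3_decomp (f p) (_root_.pu g p)]
  refine (WithLp.equiv 2 (Fin 3 → ℝ)).injective (funext fun i => ?_)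
  fin_cases i <;>
    simp [ee, EuclideanSpace.single_apply] <;> ring

lemma pt_cross {f g : ℝ × ℝ → E3} (hf : Sm f) (hg : Sm g) (p : ℝ × ℝ) :
    _root_.pt (fun q => cross3 (f q) (g q)) p
      = cross3 (_root_.pt f p) (g p) + cross3 (f p) (_root_.pt g p) := by
  have hc : ∀ i j : Fin 3, Sm (fun q => f q i * g q j) :=
    fun i j => (hf.coord i).mul (hg.coord j)
  have hsm : ∀ i j k l : Fin 3, Sm (fun q => f q i * g q j - f q k * g q l) :=
    fun i j k l => (hc i j).sub (hc k l)
  rw [cross_fun_decomp]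
  rw [pt_add (Sm.smul (hsm 1 2 2 1) (Sm.const _))
    (Sm.add (Sm.smul (hsm 2 0 0 2) (Sm.const _)) (Sm.smul (hsm 0 1 1 0) (Sm.const _))),
    pt_add (Sm.smul (hsm 2 0 0 2) (Sm.const _)) (Sm.smul (hsm 0 1 1 0) (Sm.const _)),
    pt_smul (hsm 1 2 2 1) (Sm.const _), pt_smul (hsm 2 0 0 2) (Sm.const _),
    pt_smul (hsm 0 1 1 0) (Sm.const _), pt_const, pt_const, pt_const]
  rw [pt_sub (hc 1 2) (hc 2 1), pt_sub (hc 2 0) (hc 0 2), pt_sub (hc 0 1) (hc 1 0)]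
  rw [pt_mul (hf.coord 1) (hg.coord 2), pt_mul (hf.coord 2) (hg.coord 1),
    pt_mul (hf.coord 2) (hg.coord 0), pt_mul (hf.coord 0) (hg.coord 2),
    pt_mul (hf.coord 0) (hg.coord 1), pt_mul (hf.coord 1) (hg.coord 0)]
  simp only [pt_coord hf, pt_coord hg]
  rw [cross3_decomp (_root_.pt f p) (g p), cross3_decomp (f p) (_root_.pt g p)]
  refine (WithLp.equiv 2 (Fin 3 → ℝ)).injective (funext fun i => ?_)
  fin_cases i <;>
    simp [ee, EuclideanSpace.single_apply] <;> ring

end cross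

section algebra
open Matrix
local notation "E3" => EuclideanSpace ℝ (Fin 3)

lemma inner_cross_left (a b : E3) : (inner ℝ (cross3 a b) a : ℝ) = 0 := by
  rw [inner3]
  simp only [cross3_apply]
  simp [Fin.isValue]
  ring

lemma inner_cross_right (a b : E3) : (inner ℝ (cross3 a b) b : ℝ) = 0 := by
  rw [inner3]
  simp only [cross3_apply]
  simp [Fin.isValue]
  ring

lemma cross_lagrange (a b : E3) : (inner ℝ (cross3 a b) (cross3 a b) : ℝ)
    = (inner ℝ a a : ℝ) * (inner ℝ b b : ℝ) - (inner ℝ a b : ℝ) ^ 2 := by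
  simp only [inner3, cross3_apply]
  simp [Fin.isValue]
  ring

/-- Expansion of a vector in an orthonormal frame of `ℝ³`. -/
lemma expand3 {T N B : E3} (hTT : (inner ℝ T T : ℝ) = 1) (hNN : (inner ℝ N N : ℝ) = 1)
    (hBB : (inner ℝ B B : ℝ) = 1) (hTN : (inner ℝ T N : ℝ) = 0)
    (hTB : (inner ℝ T B : ℝ) = 0) (hNB : (inner ℝ N B : ℝ) = 0) (V : E3) :
    V = (inner ℝ V T : ℝ) • T + (inner ℝ V N : ℝ) • N + (inner ℝ V B : ℝ) • B := by
  classical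
  set M : Matrix (Fin 3) (Fin 3) ℝ :=
    Matrix.of ![fun j => T j, fun j => N j, fun j => B j] with hM
  have h1 : M * Mᵀ = 1 := by
    ext i j
    fin_cases i <;> fin_cases j <;>
      simp [hM, Matrix.mul_apply, Matrix.transpose_apply, Fin.sum_univ_three,
        Matrix.one_apply, Matrix.vecHead, Matrix.vecTail, Matrix.cons_val_one,
        Matrix.cons_val_zero, Function.comp] <;>
      first
        | (rw [inner3] at hTT; linarith)
        | (rw [inner3] at hNN; linarith)
        | (rw [inner3] at hBB; linarith)
        | (rw [inner3] at hTN; linarith)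
        | (rw [inner3] at hTB; linarith)
        | (rw [inner3] at hNB; linarith)
  have h2 : Mᵀ * M = 1 := mul_eq_one_comm.mp h1
  have e : ∀ i j : Fin 3, (Mᵀ * M) i j = (1 : Matrix (Fin 3) (Fin 3) ℝ) i j := by
    intro i j; rw [h2]
  refine (WithLp.equiv 2 (Fin 3 → ℝ)).injective (funext fun i => ?_)
  have e0 := e i 0; have e1 := e i 1; have e2 := e i 2
  simp only [hM, Matrix.mul_apply, Matrix.transpose_apply, Fin.sum_univ_three,
    Matrix.one_apply, Matrix.of_apply] at e0 e1 e2
  fin_cases i <;>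
    · simp only [inner3] at e0 e1 e2 ⊢
      simp at e0 e1 e2 ⊢
      linear_combination (-(V 0 * e0) - V 1 * e1 - V 2 * e2)

end algebra
end NE

open NE in
theorem normal_evolution
    (X : ℝ × ℝ → EuclideanSpace ℝ (Fin 3)) (vN vB vT : ℝ × ℝ → ℝ)
    (g κ τ : ℝ × ℝ → ℝ) (T N B : ℝ × ℝ → EuclideanSpace ℝ (Fin 3))
    (hX : ContDiff ℝ (⊤ : ℕ∞) X) (hXper : ∀ u t : ℝ, X (u + 1, t) = X (u, t))
    (hvN : ContDiff ℝ (⊤ : ℕ∞) vN) (hvNper : ∀ u t : ℝ, vN (u + 1, t) = vN (u, t))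
    (hvB : ContDiff ℝ (⊤ : ℕ∞) vB) (hvBper : ∀ u t : ℝ, vB (u + 1, t) = vB (u, t))
    (hvT : ContDiff ℝ (⊤ : ℕ∞) vT) (hvTper : ∀ u t : ℝ, vT (u + 1, t) = vT (u, t))
    (hg : ∀ p : ℝ × ℝ, g p = ‖pu X p‖) (hgpos : ∀ p : ℝ × ℝ, 0 < g p)
    (hT : ∀ p : ℝ × ℝ, T p = Ds X X p)
    (hκ : ∀ p : ℝ × ℝ, κ p = ‖Ds X T p‖) (hκpos : ∀ p : ℝ × ℝ, 0 < κ p)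
    (hN : ∀ p : ℝ × ℝ, N p = (κ p)⁻¹ • Ds X T p)
    (hB : ∀ p : ℝ × ℝ, B p = cross3 (T p) (N p))
    (hτ : ∀ p : ℝ × ℝ, τ p = -(inner ℝ (Ds X B p) (N p) : ℝ))
    (hflow : ∀ p : ℝ × ℝ, pt X p = vN p • N p + vB p • B p + vT p • T p) :
    ∀ p : ℝ × ℝ,
      κ p • pt N p =
        (-(κ p * (Ds X vN p + κ p * vT p - τ p * vB p))) • T p
        + (Ds X (Ds X vB) p + Ds X (fun q => τ q * vN q) p
            + τ p * (Ds X vN p + κ p * vT p - τ p * vB p)) • B p := by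
  -- basic smoothness
  have smX : Sm X := fun p => hX.contDiffAt.of_le (by simp)
  have smvN : Sm vN := fun p => hvN.contDiffAt.of_le (by simp)
  have smvB : Sm vB := fun p => hvB.contDiffAt.of_le (by simp)
  have smvT : Sm vT := fun p => hvT.contDiffAt.of_le (by simp)
  have hg0 : ∀ p, g p ≠ 0 := fun p => (hgpos p).ne'
  have hκ0 : ∀ p, κ p ≠ 0 := fun p => (hκpos p).ne'
  have hpuX0 : ∀ p, pu X p ≠ 0 := by
    intro p h
    have := hgpos p; rw [hg p, h] at this; simp at this
  have hgfun : g = fun p => ‖pu X p‖ := funext hg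
  have smg : Sm g := by rw [hgfun]; exact Sm.norm' smX.puSm hpuX0
  have hTfun : T = fun q => (g q)⁻¹ • pu X q := by
    funext q; rw [hT q, Ds, hg q]
  have smT : Sm T := by rw [hTfun]; exact (smg.inv hg0).smul smX.puSm
  have hDsT : ∀ p, Ds X T p = (g p)⁻¹ • pu T p := by
    intro p; rw [Ds, hg p]
  have smDT : Sm (fun q => (g q)⁻¹ • pu T q) := (smg.inv hg0).smul smT.puSm
  have hκfun : κ = fun p => ‖(g p)⁻¹ • pu T p‖ := by
    funext p; rw [hκ p, hDsT p]
  have hDT0 : ∀ p, (g p)⁻¹ • pu T p ≠ 0 := by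
    intro p h
    have := hκpos p; rw [hκfun] at this; simp only at this; rw [h] at this; simp at this
  have smκ : Sm κ := by rw [hκfun]; exact Sm.norm' smDT hDT0
  have hNfun : N = fun p => (κ p)⁻¹ • ((g p)⁻¹ • pu T p) := by
    funext p; rw [hN p, hDsT p]
  have smN : Sm N := by rw [hNfun]; exact (smκ.inv hκ0).smul smDT
  have hBfun : B = fun q => cross3 (T q) (N q) := funext hB
  have smB : Sm B := by rw [hBfun]; exact Sm.crossc smT smN
  have smDB : Sm (fun q => (g q)⁻¹ • pu B q) := (smg.inv hg0).smul smB.puSm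
  have hτfun : τ = fun p => -(inner ℝ ((g p)⁻¹ • pu B p) (N p) : ℝ) := by
    funext p; rw [hτ p, Ds, hg p]
  have smτ : Sm τ := by
    rw [hτfun]; intro p; exact ((smDB.inner' smN) p).neg
  -- pu X = g • T
  have hpuX : ∀ p, pu X p = g p • T p := by
    intro p; rw [hTfun]; simp only [smul_smul]
    rw [mul_inv_cancel₀ (hg0 p), one_smul]
  -- pu T = (g κ) • N
  have puT_eq : ∀ p, pu T p = (g p * κ p) • N p := by
    intro p; rw [hNfun]; simp only [smul_smul]
    rw [show g p * κ p * ((κ p)⁻¹ * (g p)⁻¹) = 1 by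
      rw [show (κ p)⁻¹ * (g p)⁻¹ = (g p * κ p)⁻¹ by rw [mul_inv]; ring,
        mul_inv_cancel₀ (mul_ne_zero (hg0 p) (hκ0 p))], one_smul]
  -- orthonormality
  have nTT : ∀ p, (inner ℝ (T p) (T p) : ℝ) = 1 := by
    intro p; rw [hTfun]; simp only
    rw [real_inner_smul_left, real_inner_smul_right, real_inner_self_eq_norm_sq, ← hg p]
    field_simp [hg0 p]
  have nNN : ∀ p, (inner ℝ (N p) (N p) : ℝ) = 1 := by
    intro p; rw [hNfun]; simp only
    rw [real_inner_smul_left, real_inner_smul_right, real_inner_self_eq_norm_sq]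
    rw [show ‖(g p)⁻¹ • pu T p‖ = κ p from (hκfun ▸ rfl)]
    field_simp [hκ0 p]
  have nTN : ∀ p, (inner ℝ (T p) (N p) : ℝ) = 0 := by
    intro p
    have h1 : (fun q => (inner ℝ (T q) (T q) : ℝ)) = fun _ => (1 : ℝ) := funext nTT
    have h2 : pu (fun q => (inner ℝ (T q) (T q) : ℝ)) p = 0 := by rw [h1, pu_const]
    rw [pu_inner smT smT p] at h2
    simp only [puT_eq p, real_inner_smul_left, real_inner_smul_right] at h2
    have hcomm : (inner ℝ (N p) (T p) : ℝ) = inner ℝ (T p) (N p) := real_inner_comm _ _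
    have h3 : (g p * κ p) * (inner ℝ (T p) (N p) : ℝ) = 0 := by
      linear_combination h2 / 2 - (g p * κ p) / 2 * hcomm
    have := mul_ne_zero (hg0 p) (hκ0 p)
    rcases mul_eq_zero.mp h3 with h | h
    · exact absurd h this
    · exact h
  have nNT : ∀ p, (inner ℝ (N p) (T p) : ℝ) = 0 := fun p => by
    rw [real_inner_comm]; exact nTN p
  have nBB : ∀ p, (inner ℝ (B p) (B p) : ℝ) = 1 := by
    intro p; rw [hB p, cross_lagrange, nTT p, nNN p, nTN p]; ring
  have nTB : ∀ p, (inner ℝ (T p) (B p) : ℝ) = 0 := by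
    intro p; rw [hB p, real_inner_comm]; exact inner_cross_left _ _
  have nNB : ∀ p, (inner ℝ (N p) (B p) : ℝ) = 0 := by
    intro p; rw [hB p, real_inner_comm]; exact inner_cross_right _ _
  have nBT : ∀ p, (inner ℝ (B p) (T p) : ℝ) = 0 := fun p => by
    rw [real_inner_comm]; exact nTB p
  have nBN : ∀ p, (inner ℝ (B p) (N p) : ℝ) = 0 := fun p => by
    rw [real_inner_comm]; exact nNB p
  -- τ : ⟪pu B, N⟫ = −g τ
  have puB_N : ∀ p, (inner ℝ (pu B p) (N p) : ℝ) = -(g p * τ p) := by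
    intro p
    have h1 : τ p = -(inner ℝ ((g p)⁻¹ • pu B p) (N p) : ℝ) := by
      rw [hτ p, Ds, hg p]
    rw [real_inner_smul_left] at h1
    have hginv : g p * (g p)⁻¹ = 1 := mul_inv_cancel₀ (hg0 p)
    linear_combination g p * h1 - (inner ℝ (pu B p) (N p) : ℝ) * hginv
  -- derivatives of constant inner products
  have dconst : ∀ (f₁ f₂ : ℝ × ℝ → EuclideanSpace ℝ (Fin 3)), Sm f₁ → Sm f₂ →
      ∀ (c : ℝ), (∀ q, (inner ℝ (f₁ q) (f₂ q) : ℝ) = c) →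
      ∀ p, (inner ℝ (pu f₁ p) (f₂ p) : ℝ) + (inner ℝ (f₁ p) (pu f₂ p) : ℝ) = 0 := by
    intro f₁ f₂ h1 h2 c hc p
    have he : (fun q => (inner ℝ (f₁ q) (f₂ q) : ℝ)) = fun _ => c := funext hc
    have h0 : pu (fun q => (inner ℝ (f₁ q) (f₂ q) : ℝ)) p = 0 := by rw [he, pu_const]
    rw [pu_inner h1 h2 p] at h0
    exact h0
  have dconstT : ∀ (f₁ f₂ : ℝ × ℝ → EuclideanSpace ℝ (Fin 3)), Sm f₁ → Sm f₂ →
      ∀ (c : ℝ), (∀ q, (inner ℝ (f₁ q) (f₂ q) : ℝ) = c) →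
      ∀ p, (inner ℝ (pt f₁ p) (f₂ p) : ℝ) + (inner ℝ (f₁ p) (pt f₂ p) : ℝ) = 0 := by
    intro f₁ f₂ h1 h2 c hc p
    have he : (fun q => (inner ℝ (f₁ q) (f₂ q) : ℝ)) = fun _ => c := funext hc
    have h0 : pt (fun q => (inner ℝ (f₁ q) (f₂ q) : ℝ)) p = 0 := by rw [he, pt_const]
    rw [pt_inner h1 h2 p] at h0
    exact h0
  -- Frenet: pu N
  have puN_T : ∀ p, (inner ℝ (pu N p) (T p) : ℝ) = -(g p * κ p) := by
    intro p
    have h0 := dconst T N smT smN 0 nTN p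
    rw [puT_eq p, real_inner_smul_left, nNN p] at h0
    rw [real_inner_comm]
    linarith
  have puN_N : ∀ p, (inner ℝ (pu N p) (N p) : ℝ) = 0 := by
    intro p
    have h0 := dconst N N smN smN 1 nNN p
    have hcomm : (inner ℝ (N p) (pu N p) : ℝ) = inner ℝ (pu N p) (N p) := real_inner_comm _ _
    linarith
  have puN_B : ∀ p, (inner ℝ (pu N p) (B p) : ℝ) = g p * τ p := by
    intro p
    have h0 := dconst N B smN smB 0 nNB p
    have hcomm : (inner ℝ (N p) (pu B p) : ℝ) = inner ℝ (pu B p) (N p) := real_inner_comm _ _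
    linarith [puB_N p]
  have puN_eq : ∀ p, pu N p = (-(g p * κ p)) • T p + (g p * τ p) • B p := by
    intro p
    have := expand3 (nTT p) (nNN p) (nBB p) (nTN p) (nTB p) (nNB p) (pu N p)
    rw [puN_T p, puN_N p, puN_B p] at this
    rw [this]; module
  -- Frenet: pu B
  have puB_eq : ∀ p, pu B p = (-(g p * τ p)) • N p := by
    intro p
    have hT' : (inner ℝ (pu B p) (T p) : ℝ) = 0 := by
      have h0 := dconst B T smB smT 0 nBT p
      rw [puT_eq p, real_inner_smul_right, nBN p] at h0
      linarith
    have hB' : (inner ℝ (pu B p) (B p) : ℝ) = 0 := by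
      have h0 := dconst B B smB smB 1 nBB p
      have hcomm : (inner ℝ (B p) (pu B p) : ℝ) = inner ℝ (pu B p) (B p) := real_inner_comm _ _
      linarith
    have := expand3 (nTT p) (nNN p) (nBB p) (nTN p) (nTB p) (nNB p) (pu B p)
    rw [hT', puB_N p, hB'] at this
    rw [this]; module
  -- flow quantities
  have hWfun : pt X = fun q => vN q • N q + vB q • B q + vT q • T q := funext hflow
  have smW : Sm (pt X) := smX.ptSm
  have smPvN : Sm (pu vN) := smvN.puSm
  have smPvB : Sm (pu vB) := smvB.puSm
  have smPvT : Sm (pu vT) := smvT.puSm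
  -- pu of the velocity field
  have puW_eq : ∀ p, pu (pt X) p = (pu vT p - g p * κ p * vN p) • T p
      + ((pu vN p + g p * κ p * vT p - g p * τ p * vB p) • N p
        + (pu vB p + g p * τ p * vN p) • B p) := by
    intro p
    rw [hWfun]
    rw [pu_add ((smvN.smul smN).add (smvB.smul smB)) (smvT.smul smT) p,
      pu_add (smvN.smul smN) (smvB.smul smB) p,
      pu_smul smvN smN p, pu_smul smvB smB p, pu_smul smvT smT p,
      puN_eq p, puB_eq p, puT_eq p]
    module
  -- pt g = c
  have ptg_eq : ∀ p, pt g p = pu vT p - g p * κ p * vN p := by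
    intro p
    have hgg : (fun q => g q * g q) = fun q => (inner ℝ (pu X q) (pu X q) : ℝ) := by
      funext q; rw [real_inner_self_eq_norm_sq, ← hg q]; ring
    have h1 : pt (fun q => g q * g q) p = pt (fun q => (inner ℝ (pu X q) (pu X q) : ℝ)) p := by
      rw [hgg]
    rw [pt_mul smg smg p, pt_inner smX.puSm smX.puSm p] at h1
    rw [pt_pu_comm smX p, puW_eq p, hpuX p] at h1
    simp only [inner_add_left, inner_add_right, real_inner_smul_left, real_inner_smul_right,
      nTT p, nTN p, nTB p, nNT p, nNB p, nBT p, nBN p, nNN p, nBB p] at h1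
    have h2 : g p * (pt g p - (pu vT p - g p * κ p * vN p)) = 0 := by ring_nf; linarith [h1]
    rcases mul_eq_zero.mp h2 with h | h
    · exact absurd h (hg0 p)
    · linarith
  -- pt T
  have ptT_eq : ∀ p, pt T p =
      ((g p)⁻¹ * (pu vN p + g p * κ p * vT p - g p * τ p * vB p)) • N p
      + ((g p)⁻¹ * (pu vB p + g p * τ p * vN p)) • B p := by
    intro p
    rw [show pt T p = pt (fun q => (g q)⁻¹ • pu X q) p by rw [← hTfun]]
    rw [pt_smul (smg.inv hg0) smX.puSm p, pt_inv smg p (hg0 p),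
      pt_pu_comm smX p, puW_eq p, hpuX p, ptg_eq p]
    match_scalars <;> (field_simp [hg0 p]; try ring)
  -- ⟪pt N, N⟫ = 0
  have ptN_N : ∀ p, (inner ℝ (pt N p) (N p) : ℝ) = 0 := by
    intro p
    have h0 := dconstT N N smN smN 1 nNN p
    have hcomm : (inner ℝ (N p) (pt N p) : ℝ) = inner ℝ (pt N p) (N p) := real_inner_comm _ _
    linarith
  -- main computation
  intro p
  -- abbreviations as functions
  have smA : Sm (fun q => (g q)⁻¹ * (pu vN q + g q * κ q * vT q - g q * τ q * vB q)) :=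
    (smg.inv hg0).mul ((smPvN.add ((smg.mul smκ).mul smvT)).sub ((smg.mul smτ).mul smvB))
  have smBf : Sm (fun q => (g q)⁻¹ * (pu vB q + g q * τ q * vN q)) :=
    (smg.inv hg0).mul (smPvB.add ((smg.mul smτ).mul smvN))
  have ptTfun : pt T = fun q =>
      ((g q)⁻¹ * (pu vN q + g q * κ q * vT q - g q * τ q * vB q)) • N q
      + ((g q)⁻¹ * (pu vB q + g q * τ q * vN q)) • B q := funext ptT_eq
  have puTfun : pu T = fun q => (g q * κ q) • N q := funext puT_eq
  have key : pt (pu T) p = pu (pt T) p := pt_pu_comm smT p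
  rw [puTfun, ptTfun] at key
  rw [pt_smul (smg.mul smκ) smN p] at key
  rw [pu_add (smA.smul smN) (smBf.smul smB) p, pu_smul smA smN p, pu_smul smBf smB p,
    puN_eq p, puB_eq p] at key
  -- identify pt (g κ) by taking inner product with N
  have hD : pt (fun q => g q * κ q) p =
      pu (fun q => (g q)⁻¹ * (pu vN q + g q * κ q * vT q - g q * τ q * vB q)) p
      - g p * τ p * ((g p)⁻¹ * (pu vB p + g p * τ p * vN p)) := by
    have h6 := congrArg (fun v => (inner ℝ v (N p) : ℝ)) key
    simp only [inner_add_left, real_inner_smul_left, nTN p, nNT p, nNB p, nBN p,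
      nNN p, nTB p, nBT p, ptN_N p] at h6
    linarith
  rw [hD] at key
  -- solve for (g κ) • pt N
  have key2 : (g p * κ p) • pt N p =
      (-((g p * κ p) * ((g p)⁻¹ * (pu vN p + g p * κ p * vT p - g p * τ p * vB p)))) • T p
      + ((g p * τ p * ((g p)⁻¹ * (pu vN p + g p * κ p * vT p - g p * τ p * vB p))
          + pu (fun q => (g q)⁻¹ * (pu vB q + g q * τ q * vN q)) p)) • B p := by
    linear_combination (norm := module) key
  -- decompose pu Bf
  have hBfsplit : (fun q => (g q)⁻¹ * (pu vB q + g q * τ q * vN q))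
      = fun q => (g q)⁻¹ * pu vB q + τ q * vN q := by
    funext q; field_simp [hg0 q]
    try ring
  have hpuBf : pu (fun q => (g q)⁻¹ * (pu vB q + g q * τ q * vN q)) p
      = pu (fun q => (g q)⁻¹ * pu vB q) p + pu (fun q => τ q * vN q) p := by
    rw [hBfsplit]
    exact pu_add ((smg.inv hg0).mul smPvB) (smτ.mul smvN) p
  rw [hpuBf] at key2
  -- rewrite the goal's Ds expressions
  have hDsvN : Ds X vN p = (g p)⁻¹ * pu vN p := by rw [Ds, hg p]; rfl
  have hDsvBfun : Ds X vB = fun q => (g q)⁻¹ * pu vB q := by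
    funext q; rw [Ds, hg q]; rfl
  have hDsDsvB : Ds X (Ds X vB) p = (g p)⁻¹ * pu (fun q => (g q)⁻¹ * pu vB q) p := by
    rw [Ds, hg p, hDsvBfun]; rfl
  have hDsτvN : Ds X (fun q => τ q * vN q) p = (g p)⁻¹ * pu (fun q => τ q * vN q) p := by
    rw [Ds, hg p]; rfl
  rw [hDsvN, hDsDsvB, hDsτvN]
  -- conclude: multiply key2 by g⁻¹
  have key3 := congrArg (fun v => (g p)⁻¹ • v) key2
  simp only [smul_add, smul_smul] at key3
  rw [show (g p)⁻¹ * (g p * κ p) = κ p by field_simp [hg0 p]] at key3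
  rw [key3]
  match_scalars <;> (field_simp [hg0 p]; try ring)
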